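/- Let X = (Ω, S) be a pseudocyclic scheme of degree n and valency k ≥ 2 with n > 3k⁶. Then for any x, y, z ∈ S_k there exists q ∈ S_k such that qq* ∩ (xx*yy* ∪ xx*zz* ∪ zz*yy*) = {1}. -/
import Mathlib


open Finset

abbrev BRel (Ω : Type*) := Finset (Ω × Ω)

variable {Ω : Type*} [Fintype Ω] [DecidableEq Ω]

/-- The diagonal relation `1_Ω`. -/
def diagRel (Ω : Type*) [Fintype Ω] [DecidableEq Ω] : BRel Ω :=
  Finset.univ.filter (fun p => p.1 = p.2)

/-- The converse relation `r*`. -/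
def convRel (r : BRel Ω) : BRel Ω := r.image Prod.swap

/-- Relational composition `a ∘ b`. -/
def compBRel (a b : BRel Ω) : BRel Ω :=
  Finset.univ.filter (fun p => ∃ γ, (p.1, γ) ∈ a ∧ (γ, p.2) ∈ b)

/-- An association scheme on a finite set `Ω`: a partition `S` of `Ω × Ω` into nonempty
basis relations, containing the diagonal, closed under converse, with well-defined
intersection numbers `c r s t`. -/
structure AssocScheme (Ω : Type*) [Fintype Ω] [DecidableEq Ω] where
  S : Finset (BRel Ω)
  nonempty : ∀ s ∈ S, s.Nonempty
  partition : ∀ p : Ω × Ω, ∃! s, s ∈ S ∧ p ∈ s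
  diag_mem : diagRel Ω ∈ S
  conv_mem : ∀ s ∈ S, convRel s ∈ S
  c : BRel Ω → BRel Ω → BRel Ω → ℕ
  c_spec : ∀ r ∈ S, ∀ s ∈ S, ∀ t ∈ S, ∀ p ∈ t,
    (Finset.univ.filter (fun γ => (p.1, γ) ∈ r ∧ (γ, p.2) ∈ s)).card = c r s t

namespace AssocScheme

variable (X : AssocScheme Ω)

/-- The valency `n_s = c_{s,s*}^{1}`. -/
def n (s : BRel Ω) : ℕ := X.c s (convRel s) (diagRel Ω)

/-- The complex product `rs` of two basis relations: all `t ∈ S` with `c_{r,s}^t ≠ 0`. -/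
def cp (r s : BRel Ω) : Finset (BRel Ω) := X.S.filter (fun t => X.c r s t ≠ 0)

/-- The complex product of two sets of basis relations. -/
def cpS (A B : Finset (BRel Ω)) : Finset (BRel Ω) :=
  A.biUnion fun a => B.biUnion fun b => X.cp a b

/-- `S_k`: the basis relations of valency `k`. -/
def Sk (k : ℕ) : Finset (BRel Ω) := X.S.filter (fun s => X.n s = k)

/-- `x ∼ y`: every `s` in the complex product `x*y` satisfies `c_{x,s}^y = 1`. -/
def adj (x y : BRel Ω) : Prop := ∀ s ∈ X.cp (convRel x) y, X.c x s y = 1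

/-- `r(α,β)`: the unique basis relation containing `(α,β)`. -/
noncomputable def rel (α β : Ω) : BRel Ω := (X.partition (α, β)).choose

/-- The indistinguishing number `c(s) = Σ_t c_{t,t*}^s`. -/
def ind (s : BRel Ω) : ℕ := ∑ t ∈ X.S, X.c t (convRel t) s

/-- `k`-saturated: every at most four element subset of `S_k` has a common neighbor. -/
def kSaturated (k : ℕ) : Prop :=
  ∀ T ⊆ X.Sk k, T.card ≤ 4 → ∃ y ∈ X.Sk k, ∀ x ∈ T, X.adj y x

/-- `r ∈ x*z` and `s ∈ z*y` are linked with respect to `(x,y,z)`, with witness `t`. -/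
def linked (k : ℕ) (x y z r s t : BRel Ω) : Prop :=
  ∃ q ∈ X.Sk k, X.adj q x ∧ X.adj q y ∧ X.adj q z ∧
    ∃ u ∈ X.cp (convRel x) q, ∃ v ∈ X.cp (convRel y) q, ∃ w ∈ X.cp (convRel z) q,
      t ∈ X.cp r s ∧
      X.cp (convRel x) z ∩ X.cp u (convRel w) = {r} ∧
      X.cp (convRel z) y ∩ X.cp w (convRel v) = {s} ∧
      X.cp (convRel x) y ∩ X.cp u (convRel v) = {t}

/-- Desarguesian with respect to `S_k`. -/
def Desarguesian (k : ℕ) : Prop :=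
  ∀ x ∈ X.Sk k, ∀ y ∈ X.Sk k, ∀ z ∈ X.Sk k, X.adj x z → X.adj z y →
    ∀ r ∈ X.cp (convRel x) z, ∀ s ∈ X.cp (convRel z) y, ∃ t, X.linked k x y z r s t

end AssocScheme

/-- `αr = {β : (α,β) ∈ r}`. -/
def relImage (r : BRel Ω) (α : Ω) : Finset Ω := (r.filter (fun p => p.1 = α)).image Prod.snd

/-- The restriction `r_{x,y} = r ∩ (αx × αy)`. -/
def restrictRel (α : Ω) (r x y : BRel Ω) : BRel Ω :=
  r.filter (fun p => p.1 ∈ relImage x α ∧ p.2 ∈ relImage y α)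


/-- An algebraic isomorphism: a bijection between the sets of basis relations
preserving all intersection numbers. -/
def AlgIso {Ω Ω' : Type*} [Fintype Ω] [DecidableEq Ω] [Fintype Ω'] [DecidableEq Ω']
    (X : AssocScheme Ω) (X' : AssocScheme Ω') (φ : BRel Ω → BRel Ω') : Prop :=
  Set.BijOn φ ↑X.S ↑X'.S ∧
    ∀ r ∈ X.S, ∀ s ∈ X.S, ∀ t ∈ X.S, X.c r s t = X'.c (φ r) (φ s) (φ t)

/-- A `φ`-faithful map with domain `D`. -/
def Faithful {Ω Ω' : Type*} [Fintype Ω] [DecidableEq Ω] [Fintype Ω'] [DecidableEq Ω']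
    (X : AssocScheme Ω) (X' : AssocScheme Ω') (φ : BRel Ω → BRel Ω')
    (D : Finset Ω) (f : Ω → Ω') : Prop :=
  Set.InjOn f ↑D ∧ ∀ a ∈ D, ∀ b ∈ D, φ (X.rel a b) = X'.rel (f a) (f b)

/-- `f` is `φ`-extendable to the point `γ`. -/
def ExtendableAt {Ω Ω' : Type*} [Fintype Ω] [DecidableEq Ω] [Fintype Ω'] [DecidableEq Ω']
    (X : AssocScheme Ω) (X' : AssocScheme Ω') (φ : BRel Ω → BRel Ω')
    (D : Finset Ω) (f : Ω → Ω') (γ : Ω) : Prop :=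
  ∃ g : Ω → Ω', (∀ a ∈ D, g a = f a) ∧ Faithful X X' φ (insert γ D) g


section Helpers

lemma mem_convRel {r : BRel Ω} {a b : Ω} : (a, b) ∈ convRel r ↔ (b, a) ∈ r := by
  constructor
  · intro h
    obtain ⟨⟨a', b'⟩, hp, he⟩ := Finset.mem_image.1 h
    simp only [Prod.swap_prod_mk, Prod.mk.injEq] at he
    rwa [← he.1, ← he.2]
  · intro h; exact Finset.mem_image.2 ⟨(b, a), h, rfl⟩

lemma convRel_convRel (r : BRel Ω) : convRel (convRel r) = r := by
  ext ⟨a, b⟩; rw [mem_convRel, mem_convRel]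

lemma convRel_diag : convRel (diagRel Ω) = diagRel Ω := by
  ext ⟨a, b⟩
  simp only [mem_convRel, diagRel, Finset.mem_filter, Finset.mem_univ, true_and]
  exact eq_comm

namespace AssocScheme

variable (X : AssocScheme Ω)

lemma rel_mem_S (α β : Ω) : X.rel α β ∈ X.S := (X.partition (α, β)).choose_spec.1.1

lemma mem_rel (α β : Ω) : (α, β) ∈ X.rel α β := (X.partition (α, β)).choose_spec.1.2

lemma rel_eq {s : BRel Ω} (hs : s ∈ X.S) {α β : Ω} (h : (α, β) ∈ s) : s = X.rel α β :=
  (X.partition (α, β)).choose_spec.2 s ⟨hs, h⟩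

lemma card_row {s : BRel Ω} (hs : s ∈ X.S) (α : Ω) :
    (Finset.univ.filter fun γ => (α, γ) ∈ s).card = X.n s := by
  have hpd : ((α, α) : Ω × Ω) ∈ diagRel Ω := by simp [diagRel]
  have h := X.c_spec s hs (convRel s) (X.conv_mem s hs) (diagRel Ω) X.diag_mem (α, α) hpd
  rw [n, ← h]
  congr 1
  ext γ
  simp only [Finset.mem_filter, Finset.mem_univ, true_and, mem_convRel]
  tauto

lemma n_diag (α : Ω) : X.n (diagRel Ω) = 1 := by
  rw [← X.card_row X.diag_mem α]
  rw [show (Finset.univ.filter fun γ => ((α, γ) : Ω × Ω) ∈ diagRel Ω) = {α} by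
    ext γ; simp [diagRel, eq_comm]]
  simp

/-- One step of reachability. -/
def stepF (r : BRel Ω) (A : Finset Ω) : Finset Ω :=
  A.biUnion fun γ => Finset.univ.filter fun δ => (γ, δ) ∈ r

lemma mem_stepF {r : BRel Ω} {A : Finset Ω} {δ : Ω} :
    δ ∈ stepF r A ↔ ∃ γ ∈ A, (γ, δ) ∈ r := by
  simp [stepF]

lemma card_stepF {r : BRel Ω} (hr : r ∈ X.S) (A : Finset Ω) :
    (stepF r A).card ≤ A.card * X.n r := by
  calc (stepF r A).card ≤ ∑ γ ∈ A, (Finset.univ.filter fun δ => (γ, δ) ∈ r).card :=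
        Finset.card_biUnion_le
    _ = ∑ _γ ∈ A, X.n r := by
        exact Finset.sum_congr rfl fun γ _ => X.card_row hr γ
    _ = A.card * X.n r := by rw [Finset.sum_const, smul_eq_mul]

end AssocScheme

end Helpers

theorem pseudocyclic_exists_q (X : AssocScheme Ω) (k : ℕ) (hk : 2 ≤ k)
    (hps : ∀ s ∈ X.S, s ≠ diagRel Ω → X.n s = k ∧ X.ind s = k - 1)
    (hn : Fintype.card Ω > 3 * k ^ 6) :
    ∀ x ∈ X.Sk k, ∀ y ∈ X.Sk k, ∀ z ∈ X.Sk k, ∃ q ∈ X.Sk k,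
      X.cp q (convRel q) ∩
        (X.cpS (X.cp x (convRel x)) (X.cp y (convRel y)) ∪
         X.cpS (X.cp x (convRel x)) (X.cp z (convRel z)) ∪
         X.cpS (X.cp z (convRel z)) (X.cp y (convRel y))) = {diagRel Ω} := by
  classical
  intro x hx y hy z hz
  have hk0 : 0 < k := by omega
  have hΩ : 0 < Fintype.card Ω := lt_of_le_of_lt (Nat.zero_le _) hn
  obtain ⟨α⟩ := Fintype.card_pos_iff.1 hΩ
  -- basic facts about x, y, z
  simp only [AssocScheme.Sk, Finset.mem_filter] at hx hy hz
  have hnd : ∀ s ∈ X.S, X.n s = k → s ≠ diagRel Ω := by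
    intro s _ hns hsd
    rw [hsd, X.n_diag α] at hns; omega
  -- n and membership facts for a relation of valency k and its converse
  have hconvk : ∀ s ∈ X.S, s ≠ diagRel Ω →
      convRel s ∈ X.S ∧ convRel s ≠ diagRel Ω ∧ X.n (convRel s) = k := by
    intro s hsS hsd
    have h1 : convRel s ∈ X.S := X.conv_mem s hsS
    have h2 : convRel s ≠ diagRel Ω := by
      intro h
      apply hsd
      rw [← convRel_convRel s, h, convRel_diag]
    exact ⟨h1, h2, (hps _ h1 h2).1⟩
  have hxd : x ≠ diagRel Ω := hnd x hx.1 hx.2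
  have hyd : y ≠ diagRel Ω := hnd y hy.1 hy.2
  have hzd : z ≠ diagRel Ω := hnd z hz.1 hz.2
  -- diag is in every cp a (convRel a) for a ∈ S of valency k, and c diag diag diag = 1
  have hdiagcp : ∀ a ∈ X.S, X.n a = k → diagRel Ω ∈ X.cp a (convRel a) := by
    intro a haS hak
    simp only [AssocScheme.cp, Finset.mem_filter]
    refine ⟨X.diag_mem, ?_⟩
    show X.n a ≠ 0
    omega
  have hcddd : X.c (diagRel Ω) (diagRel Ω) (diagRel Ω) = 1 := by
    have hpd : ((α, α) : Ω × Ω) ∈ diagRel Ω := by simp [diagRel]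
    rw [← X.c_spec (diagRel Ω) X.diag_mem (diagRel Ω) X.diag_mem (diagRel Ω) X.diag_mem
      (α, α) hpd]
    rw [show (Finset.univ.filter fun γ => ((α, γ) : Ω × Ω) ∈ diagRel Ω ∧
        ((γ, α) : Ω × Ω) ∈ diagRel Ω) = {α} by
      ext γ; simp [diagRel, eq_comm]]
    simp
  have hdiagcpS : ∀ a ∈ X.S, ∀ b ∈ X.S, X.n a = k → X.n b = k →
      diagRel Ω ∈ X.cpS (X.cp a (convRel a)) (X.cp b (convRel b)) := by
    intro a haS b hbS hak hbk
    simp only [AssocScheme.cpS, Finset.mem_biUnion]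
    refine ⟨diagRel Ω, hdiagcp a haS hak, diagRel Ω, hdiagcp b hbS hbk, ?_⟩
    simp only [AssocScheme.cp, Finset.mem_filter]
    exact ⟨X.diag_mem, by rw [hcddd]; omega⟩
  by_contra hcon
  push_neg at hcon
  -- abbreviation for the union
  set T : Finset (BRel Ω) :=
    X.cpS (X.cp x (convRel x)) (X.cp y (convRel y)) ∪
      X.cpS (X.cp x (convRel x)) (X.cp z (convRel z)) ∪
      X.cpS (X.cp z (convRel z)) (X.cp y (convRel y)) with hT
  have hdiagT : diagRel Ω ∈ T := by
    rw [hT]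
    exact Finset.mem_union_left _ (Finset.mem_union_left _
      (hdiagcpS x hx.1 y hy.1 hx.2 hy.2))
  have hTS : ∀ s ∈ T, s ∈ X.S := by
    intro s hs
    rw [hT] at hs
    simp only [Finset.mem_union, AssocScheme.cpS, Finset.mem_biUnion,
      AssocScheme.cp, Finset.mem_filter] at hs
    rcases hs with (⟨_, _, _, _, h⟩ | ⟨_, _, _, _, h⟩) | ⟨_, _, _, _, h⟩ <;> exact h.1
  -- the bad points and ambiguity sets
  set Bad : Finset Ω := Finset.univ.filter
    (fun β => X.rel α β ∈ T ∧ X.rel α β ≠ diagRel Ω) with hBad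
  set G : Ω → Finset Ω := fun β => Finset.univ.filter
    (fun γ => X.rel α γ = X.rel β γ) with hG
  set W : Finset (Ω × Ω) := Bad.biUnion (fun β => (G β).image (fun γ => (β, γ))) with hW
  -- each q ∈ Sk produces a pair in W
  have hmap : ∀ q ∈ X.Sk k, ∃ p : Ω × Ω, p ∈ W ∧ (α, p.2) ∈ q := by
    intro q hq
    have hq' := hq
    simp only [AssocScheme.Sk, Finset.mem_filter] at hq'
    obtain ⟨hqS, hqk⟩ := hq'
    have hqd : q ≠ diagRel Ω := hnd q hqS hqk
    have hdI : diagRel Ω ∈ X.cp q (convRel q) ∩ T :=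
      Finset.mem_inter.2 ⟨hdiagcp q hqS hqk, hdiagT⟩
    have hsex : ∃ s ∈ X.cp q (convRel q) ∩ T, s ≠ diagRel Ω := by
      by_contra h
      push_neg at h
      apply hcon q hq
      apply Finset.Subset.antisymm
      · intro s hs
        rw [Finset.mem_singleton]
        exact h s hs
      · intro s hs
        rw [Finset.mem_singleton] at hs
        rw [hs]
        exact hdI
    obtain ⟨s, hsI, hsd⟩ := hsex
    obtain ⟨hscp, hsT⟩ := Finset.mem_inter.1 hsI
    simp only [AssocScheme.cp, Finset.mem_filter] at hscp
    obtain ⟨hsS, hsc⟩ := hscp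
    -- pick β with (α, β) ∈ s
    have hrow : (Finset.univ.filter fun γ => (α, γ) ∈ s).card = X.n s := X.card_row hsS α
    have hns : 0 < X.n s := by
      rw [(hps s hsS hsd).1]; omega
    obtain ⟨β, hβ⟩ := Finset.card_pos.1 (by rw [hrow]; exact hns)
    have hβs : (α, β) ∈ s := (Finset.mem_filter.1 hβ).2
    -- pick γ with (α, γ) ∈ q and (β, γ) ∈ q
    have hcnt := X.c_spec q hqS (convRel q) (X.conv_mem q hqS) s hsS (α, β) hβs
    have : (Finset.univ.filter fun γ => (α, γ) ∈ q ∧ (γ, β) ∈ convRel q).Nonempty := by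
      rw [← Finset.card_pos, hcnt]
      omega
    obtain ⟨γ, hγ⟩ := this
    obtain ⟨_, hγ1, hγ2⟩ := Finset.mem_filter.1 hγ
    have hγ2' : (β, γ) ∈ q := mem_convRel.1 hγ2
    refine ⟨(β, γ), ?_, hγ1⟩
    rw [hW]
    rw [Finset.mem_biUnion]
    refine ⟨β, ?_, ?_⟩
    · rw [hBad, Finset.mem_filter]
      rw [← X.rel_eq hsS hβs]
      exact ⟨Finset.mem_univ β, hsT, hsd⟩
    · rw [Finset.mem_image]
      refine ⟨γ, ?_, rfl⟩
      rw [hG]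
      simp only [Finset.mem_filter, Finset.mem_univ, true_and]
      rw [← X.rel_eq hqS hγ1, ← X.rel_eq hqS hγ2']
  -- cardinality of G β for β ∈ Bad
  have hGcard : ∀ β ∈ Bad, (G β).card = k - 1 := by
    intro β hβ
    rw [hBad, Finset.mem_filter] at hβ
    obtain ⟨-, hβT, hβd⟩ := hβ
    have hsS : X.rel α β ∈ X.S := X.rel_mem_S α β
    have hsp : (α, β) ∈ X.rel α β := X.mem_rel α β
    have hind : X.ind (X.rel α β) = k - 1 := (hps _ hsS hβd).2
    have hGe : G β = X.S.biUnion (fun t => Finset.univ.filter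
        (fun γ => (α, γ) ∈ t ∧ (γ, β) ∈ convRel t)) := by
      ext γ
      rw [hG]
      simp only [Finset.mem_filter, Finset.mem_univ, true_and, Finset.mem_biUnion]
      constructor
      · intro h
        refine ⟨X.rel α γ, X.rel_mem_S α γ, X.mem_rel α γ, mem_convRel.2 ?_⟩
        rw [h]
        exact X.mem_rel β γ
      · rintro ⟨t, htS, h1, h2⟩
        rw [← X.rel_eq htS h1, ← X.rel_eq htS (mem_convRel.1 h2)]
    rw [hGe]
    rw [Finset.card_biUnion]
    · rw [← hind, AssocScheme.ind]
      exact Finset.sum_congr rfl fun t htS =>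
        X.c_spec t htS (convRel t) (X.conv_mem t htS) (X.rel α β) hsS (α, β) hsp
    · intro t ht t' ht' htne
      simp only [Finset.disjoint_left, Finset.mem_filter, Finset.mem_univ, true_and]
      rintro γ ⟨h1, -⟩ ⟨h1', -⟩
      exact htne (by rw [X.rel_eq ht h1, X.rel_eq ht' h1'])
  -- cardinality of W
  have hWcard : W.card ≤ Bad.card * (k - 1) := by
    rw [hW]
    calc (Bad.biUnion fun β => (G β).image (fun γ => (β, γ))).card
        ≤ ∑ β ∈ Bad, ((G β).image (fun γ => (β, γ))).card := Finset.card_biUnion_le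
      _ ≤ ∑ β ∈ Bad, (k - 1) := by
          refine Finset.sum_le_sum fun β hβ => ?_
          calc ((G β).image (fun γ => (β, γ))).card ≤ (G β).card := Finset.card_image_le
            _ = k - 1 := hGcard β hβ
      _ = Bad.card * (k - 1) := by rw [Finset.sum_const, smul_eq_mul]
  -- bound on Bad: reachability in four steps
  set U : BRel Ω → BRel Ω → Finset Ω := fun a b =>
    AssocScheme.stepF (convRel b) (AssocScheme.stepF b
      (AssocScheme.stepF (convRel a) (AssocScheme.stepF a {α}))) with hU
  have hreach : ∀ a ∈ X.S, ∀ b ∈ X.S, ∀ β : Ω,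
      X.rel α β ∈ X.cpS (X.cp a (convRel a)) (X.cp b (convRel b)) → β ∈ U a b := by
    intro a haS b hbS β hmem
    simp only [AssocScheme.cpS, Finset.mem_biUnion, AssocScheme.cp, Finset.mem_filter] at hmem
    obtain ⟨r, ⟨hrS, hcr⟩, s, ⟨hsS, hcs⟩, htS, hct⟩ := hmem
    -- δ with (α, δ) ∈ r, (δ, β) ∈ s
    have h1 := X.c_spec r hrS s hsS (X.rel α β) (X.rel_mem_S α β) (α, β) (X.mem_rel α β)
    have : (Finset.univ.filter fun δ => (α, δ) ∈ r ∧ (δ, β) ∈ s).Nonempty := by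
      rw [← Finset.card_pos, h1]; omega
    obtain ⟨δ, hδ⟩ := this
    obtain ⟨-, hδ1, hδ2⟩ := Finset.mem_filter.1 hδ
    -- ε with (α, ε) ∈ a, (ε, δ) ∈ convRel a
    have h2 := X.c_spec a haS (convRel a) (X.conv_mem a haS) r hrS (α, δ) hδ1
    have : (Finset.univ.filter fun ε => (α, ε) ∈ a ∧ (ε, δ) ∈ convRel a).Nonempty := by
      rw [← Finset.card_pos, h2]; omega
    obtain ⟨ε, hε⟩ := this
    obtain ⟨-, hε1, hε2⟩ := Finset.mem_filter.1 hε
    -- ζ with (δ, ζ) ∈ b, (ζ, β) ∈ convRel b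
    have h3 := X.c_spec b hbS (convRel b) (X.conv_mem b hbS) s hsS (δ, β) hδ2
    have : (Finset.univ.filter fun ζ => (δ, ζ) ∈ b ∧ (ζ, β) ∈ convRel b).Nonempty := by
      rw [← Finset.card_pos, h3]; omega
    obtain ⟨ζ, hζ⟩ := this
    obtain ⟨-, hζ1, hζ2⟩ := Finset.mem_filter.1 hζ
    rw [hU]
    refine AssocScheme.mem_stepF.2 ⟨ζ, ?_, hζ2⟩
    refine AssocScheme.mem_stepF.2 ⟨δ, ?_, hζ1⟩
    refine AssocScheme.mem_stepF.2 ⟨ε, ?_, hε2⟩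
    exact AssocScheme.mem_stepF.2 ⟨α, Finset.mem_singleton_self α, hε1⟩
  have hUcard : ∀ a ∈ X.S, ∀ b ∈ X.S, a ≠ diagRel Ω → b ≠ diagRel Ω →
      (U a b).card ≤ k ^ 4 := by
    intro a haS b hbS had hbd
    obtain ⟨haS', _, hak'⟩ := hconvk a haS had
    obtain ⟨hbS', _, hbk'⟩ := hconvk b hbS hbd
    have hak : X.n a = k := (hps a haS had).1
    have hbk : X.n b = k := (hps b hbS hbd).1
    rw [hU]
    calc (AssocScheme.stepF (convRel b) (AssocScheme.stepF b
          (AssocScheme.stepF (convRel a) (AssocScheme.stepF a {α})))).card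
        ≤ (AssocScheme.stepF b
            (AssocScheme.stepF (convRel a) (AssocScheme.stepF a {α}))).card *
            X.n (convRel b) := X.card_stepF hbS' _
      _ ≤ ((AssocScheme.stepF (convRel a) (AssocScheme.stepF a {α})).card * X.n b) * k := by
          rw [hbk']
          exact Nat.mul_le_mul_right k (X.card_stepF hbS _)
      _ ≤ (((AssocScheme.stepF a {α}).card * X.n (convRel a)) * k) * k := by
          rw [hbk]
          exact Nat.mul_le_mul_right k (Nat.mul_le_mul_right k (X.card_stepF haS' _))
      _ ≤ (((({α} : Finset Ω).card * X.n a) * k) * k) * k := by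
          rw [hak']
          exact Nat.mul_le_mul_right k (Nat.mul_le_mul_right k
            (Nat.mul_le_mul_right k (X.card_stepF haS _)))
      _ = k ^ 4 := by rw [Finset.card_singleton, hak]; ring
  have hBadcard : Bad.card ≤ 3 * k ^ 4 := by
    have hsub : Bad ⊆ U x y ∪ U x z ∪ U z y := by
      intro β hβ
      rw [hBad, Finset.mem_filter] at hβ
      obtain ⟨-, hβT, -⟩ := hβ
      rw [hT] at hβT
      simp only [Finset.mem_union] at hβT ⊢
      rcases hβT with (h | h) | h
      · exact Or.inl (Or.inl (hreach x hx.1 y hy.1 β h))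
      · exact Or.inl (Or.inr (hreach x hx.1 z hz.1 β h))
      · exact Or.inr (hreach z hz.1 y hy.1 β h)
    calc Bad.card ≤ (U x y ∪ U x z ∪ U z y).card := Finset.card_le_card hsub
      _ ≤ (U x y ∪ U x z).card + (U z y).card := Finset.card_union_le _ _
      _ ≤ ((U x y).card + (U x z).card) + (U z y).card :=
          Nat.add_le_add_right (Finset.card_union_le _ _) _
      _ ≤ (k ^ 4 + k ^ 4) + k ^ 4 := by
          have h1 := hUcard x hx.1 y hy.1 hxd hyd
          have h2 := hUcard x hx.1 z hz.1 hxd hzd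
          have h3 := hUcard z hz.1 y hy.1 hzd hyd
          omega
      _ = 3 * k ^ 4 := by ring
  -- cardinality of Sk
  have hSkcard : k * (X.Sk k).card = Fintype.card Ω - 1 := by
    have hpart : (Finset.univ : Finset Ω) =
        X.S.biUnion (fun s => Finset.univ.filter fun γ => (α, γ) ∈ s) := by
      ext γ
      simp only [Finset.mem_univ, true_iff, Finset.mem_biUnion, Finset.mem_filter,
        Finset.mem_univ, true_and]
      exact ⟨X.rel α γ, X.rel_mem_S α γ, X.mem_rel α γ⟩
    have hcard : Fintype.card Ω = ∑ s ∈ X.S, X.n s := by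
      rw [← Finset.card_univ, hpart, Finset.card_biUnion]
      · exact Finset.sum_congr rfl fun s hs => X.card_row hs α
      · intro s hs s' hs' hne
        simp only [Finset.disjoint_left, Finset.mem_filter, Finset.mem_univ, true_and]
        rintro γ h1 h1'
        exact hne (by rw [X.rel_eq hs h1, X.rel_eq hs' h1'])
    have hSkE : X.Sk k = X.S.erase (diagRel Ω) := by
      ext s
      simp only [AssocScheme.Sk, Finset.mem_filter, Finset.mem_erase]
      constructor
      · rintro ⟨hsS, hns⟩
        exact ⟨hnd s hsS hns, hsS⟩
      · rintro ⟨hsd, hsS⟩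
        exact ⟨hsS, (hps s hsS hsd).1⟩
    have hsum : ∑ s ∈ X.S, X.n s = 1 + k * (X.Sk k).card := by
      rw [← Finset.add_sum_erase X.S X.n X.diag_mem, X.n_diag α]
      congr 1
      rw [← hSkE]
      rw [Finset.sum_congr rfl (fun s hs => (Finset.mem_filter.1 hs).2 :
        ∀ s ∈ X.Sk k, X.n s = k)]
      rw [Finset.sum_const, smul_eq_mul, Nat.mul_comm]
    rw [hcard, hsum]
    omega
  have hSkge : 3 * k ^ 5 ≤ (X.Sk k).card := by
    have h1 : k * (3 * k ^ 5) ≤ k * (X.Sk k).card := by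
      rw [hSkcard]
      have : k * (3 * k ^ 5) = 3 * k ^ 6 := by ring
      omega
    exact Nat.le_of_mul_le_mul_left h1 hk0
  -- final contradiction via pigeonhole
  have hWlt : W.card < (X.Sk k).card := by
    have h1 : Bad.card * (k - 1) ≤ 3 * k ^ 4 * (k - 1) :=
      Nat.mul_le_mul_right _ hBadcard
    have h2 : 3 * k ^ 4 * (k - 1) < 3 * k ^ 5 := by
      have hk4 : 0 < 3 * k ^ 4 := by positivity
      calc 3 * k ^ 4 * (k - 1) < 3 * k ^ 4 * k := by
            gcongr
            omega
        _ = 3 * k ^ 5 := by ring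
    omega
  haveI : Nonempty (Ω × Ω) := ⟨(α, α)⟩
  choose! f hfW hfq using hmap
  obtain ⟨q, hq, q', hq', hne, hfe⟩ :=
    Finset.exists_ne_map_eq_of_card_lt_of_maps_to hWlt (fun q hq => hfW q hq)
  apply hne
  have hqS : q ∈ X.S := (Finset.mem_filter.1 hq).1
  have hq'S : q' ∈ X.S := (Finset.mem_filter.1 hq').1
  have h1 : q = X.rel α (f q).2 := X.rel_eq hqS (hfq q hq)
  have h2 : q' = X.rel α (f q').2 := X.rel_eq hq'S (hfq q' hq')
  rw [h1, h2, hfe]
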